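/- arXiv:1807.07290 — 3 statements merged into one kernel-verified Lean document; each statement's English description precedes it below -/
import Mathlib

section
/- Strict comparison of Nehari levels: in the setting of the comparison lemma, if additionally u₀ ∈ N₂ attains c₂ (I₂(u₀) = c₂) and A₁(u₀) > A₂(u₀) strictly, then c₁ < c₂. -/
/-!
Rescale the minimiser `u₀` of `I₂` onto `N₁`: along the ray `t ↦ t • u₀` the constraint
`‖t • u₀‖² = A₁ (t • u₀)` reads `t ^ (p - 2) = ‖u₀‖² / A₁ u₀ = A₂ u₀ / A₁ u₀ < 1`, so `t < 1`.
On a Nehari set the energy is `(1/2 - 1/p) ‖u‖²`, hence `I₁ (t • u₀) = t² I₂ u₀ < I₂ u₀ = c₂`.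
-/

open Real

section

variable {H : Type*} [NormedAddCommGroup H]

def nehariLevels (A : H → ℝ) (p : ℝ) : Set ℝ :=
  {c : ℝ | ∃ u : H, u ≠ 0 ∧ ‖u‖ ^ 2 = A u ∧ c = ‖u‖ ^ 2 / 2 - A u / p}

lemma nehari_energy_eq {A : H → ℝ} {p : ℝ} {u : H} (hu : ‖u‖ ^ 2 = A u) :
    ‖u‖ ^ 2 / 2 - A u / p = (1 / 2 - 1 / p) * ‖u‖ ^ 2 := by
  rw [← hu]; ring

lemma nehariLevels_bddBelow (A : H → ℝ) {p : ℝ} (hp : 2 ≤ p) : BddBelow (nehariLevels A p) := by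
  refine ⟨0, ?_⟩
  rintro c ⟨u, -, hu, rfl⟩
  rw [nehari_energy_eq hu]
  have : 1 / p ≤ 1 / 2 := one_div_le_one_div_of_le two_pos hp
  have := sq_nonneg ‖u‖
  nlinarith

lemma norm_sq_smul_eq_of_rpow_eq [NormedSpace ℝ H] {A : H → ℝ} {p : ℝ}
    (hom : ∀ t : ℝ, 0 ≤ t → ∀ u : H, A (t • u) = t ^ p * A u)
    {u : H} (hA : A u ≠ 0) {t : ℝ} (ht : 0 < t) (htp : t ^ (p - 2) = ‖u‖ ^ 2 / A u) :
    ‖t • u‖ ^ 2 = A (t • u) := by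
  have hsplit : t ^ p = t ^ 2 * t ^ (p - 2) := by
    rw [← rpow_natCast, ← rpow_add ht]; norm_num
  rw [hom t ht.le, hsplit, htp, norm_smul, norm_of_nonneg ht.le]
  field_simp

end

theorem stmt7_general {H : Type*} [NormedAddCommGroup H] [InnerProductSpace ℝ H]
    (p : ℝ) (hp : 2 < p) (A₁ A₂ : H → ℝ)
    (hom₁ : ∀ (t : ℝ), 0 ≤ t → ∀ u : H, A₁ (t • u) = t ^ p * A₁ u)
    (u₀ : H) (hu₀ : u₀ ≠ 0) (hNeh : ‖u₀‖ ^ 2 = A₂ u₀)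
    (hmin : ‖u₀‖ ^ 2 / 2 - A₂ u₀ / p =
      sInf {c : ℝ | ∃ u : H, u ≠ 0 ∧ ‖u‖ ^ 2 = A₂ u ∧ c = ‖u‖ ^ 2 / 2 - A₂ u / p})
    (hstrict : A₂ u₀ < A₁ u₀) :
    sInf {c : ℝ | ∃ u : H, u ≠ 0 ∧ ‖u‖ ^ 2 = A₁ u ∧ c = ‖u‖ ^ 2 / 2 - A₁ u / p} <
      sInf {c : ℝ | ∃ u : H, u ≠ 0 ∧ ‖u‖ ^ 2 = A₂ u ∧ c = ‖u‖ ^ 2 / 2 - A₂ u / p} := by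
  have hnorm : 0 < ‖u₀‖ := norm_pos_iff.mpr hu₀
  have hA₂ : 0 < A₂ u₀ := hNeh ▸ by positivity
  have hA₁ : 0 < A₁ u₀ := hA₂.trans hstrict
  have hratio : 0 < A₂ u₀ / A₁ u₀ := div_pos hA₂ hA₁
  set t := (A₂ u₀ / A₁ u₀) ^ (p - 2)⁻¹
  have ht : 0 < t := rpow_pos_of_pos hratio _
  have ht1 : t < 1 :=
    rpow_lt_one hratio.le ((div_lt_one hA₁).mpr hstrict) (inv_pos.mpr (by linarith))
  have htN : ‖t • u₀‖ ^ 2 = A₁ (t • u₀) := by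
    refine norm_sq_smul_eq_of_rpow_eq hom₁ hA₁.ne' ht ?_
    rw [hNeh, rpow_inv_rpow hratio.le (by linarith)]
  have hcoef : 0 < 1 / 2 - 1 / p := by
    have : 1 / p < 1 / 2 := one_div_lt_one_div_of_lt two_pos hp
    linarith
  have hshrink : ‖t • u₀‖ ^ 2 < ‖u₀‖ ^ 2 := by
    rw [norm_smul, norm_of_nonneg ht.le, mul_pow]
    nlinarith [pow_pos hnorm 2, mul_lt_mul ht1 ht1.le ht zero_le_one]
  calc sInf (nehariLevels A₁ p)
      ≤ ‖t • u₀‖ ^ 2 / 2 - A₁ (t • u₀) / p :=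
        csInf_le (nehariLevels_bddBelow A₁ hp.le) ⟨t • u₀, smul_ne_zero ht.ne' hu₀, htN, rfl⟩
    _ < ‖u₀‖ ^ 2 / 2 - A₂ u₀ / p := by
        rw [nehari_energy_eq htN, nehari_energy_eq hNeh]
        exact mul_lt_mul_of_pos_left hshrink hcoef
    _ = _ := hmin

/-- Strict comparison of Nehari levels: if in addition `u₀ ∈ N₂` attains `c₂` and
`A₁(u₀) > A₂(u₀)` strictly, then `c₁ < c₂`. -/
theorem stmt7 {H : Type*} [NormedAddCommGroup H] [InnerProductSpace ℝ H]
    (p : ℝ) (hp : 2 < p) (A₁ A₂ : H → ℝ) (hA₁ : Continuous A₁) (hA₂ : Continuous A₂)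
    (hom₁ : ∀ (t : ℝ), 0 ≤ t → ∀ u : H, A₁ (t • u) = t ^ p * A₁ u)
    (hom₂ : ∀ (t : ℝ), 0 ≤ t → ∀ u : H, A₂ (t • u) = t ^ p * A₂ u)
    (hle : ∀ u : H, A₂ u ≤ A₁ u)
    (u₀ : H) (hu₀ : u₀ ≠ 0) (hNeh : ‖u₀‖ ^ 2 = A₂ u₀)
    (hmin : ‖u₀‖ ^ 2 / 2 - A₂ u₀ / p =
      sInf {c : ℝ | ∃ u : H, u ≠ 0 ∧ ‖u‖ ^ 2 = A₂ u ∧ c = ‖u‖ ^ 2 / 2 - A₂ u / p})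
    (hstrict : A₂ u₀ < A₁ u₀) :
    sInf {c : ℝ | ∃ u : H, u ≠ 0 ∧ ‖u‖ ^ 2 = A₁ u ∧ c = ‖u‖ ^ 2 / 2 - A₁ u / p} <
      sInf {c : ℝ | ∃ u : H, u ≠ 0 ∧ ‖u‖ ^ 2 = A₂ u ∧ c = ‖u‖ ^ 2 / 2 - A₂ u / p} :=
  stmt7_general p hp A₁ A₂ hom₁ u₀ hu₀ hNeh hmin hstrict
end

section
/- Let â = lim_{R→∞} ess sup_{|x|>R} a(x) for a ∈ L^∞(ℝ^N), and let b be any weak* limit of translates τ_{x_n} a with |x_n| → ∞. Then ess sup b ≤ â. -/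
/-!
Test the weak* convergence against the indicator of a bounded set `s ⊆ B(0, r)`. Once
`|xₙ| ≥ R + r`, the translate `s - xₙ` lies outside `B(0, R)`, so
`∫_s τ_{xₙ} a ≤ (ess sup_{|x| > R} a) |s|`. Letting `n → ∞` and then `R → ∞` gives
`∫_s b ≤ â |s|` for every bounded `s`, hence `b ≤ â` almost everywhere.
-/

open MeasureTheory Filter Topology Metric
open scoped ENNReal

lemma MeasureTheory.MemLp.isBoundedUnder_abs_ae {α : Type*} [MeasurableSpace α] {μ : Measure α}
    {f : α → ℝ} (hf : MemLp f ⊤ μ) : IsBoundedUnder (· ≤ ·) (ae μ) fun x ↦ |f x| := by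
  have hf_top := hf.2
  rw [eLpNorm_exponent_top] at hf_top
  obtain ⟨C, hC⟩ := eLpNormEssSup_lt_top_iff_isBoundedUnder.mp hf_top
  exact ⟨C, hC.mono fun x hx ↦ hx⟩

theorem integral_mul_indicator_one {α : Type*} [MeasurableSpace α] {μ : Measure α} {s : Set α}
    (hs : MeasurableSet s) (f : α → ℝ) : ∫ y, f y * s.indicator 1 y ∂μ = ∫ y in s, f y ∂μ := by
  rw [← integral_indicator hs]
  congr 1 with y
  by_cases hy : y ∈ s <;> simp [hy]

theorem ae_le_of_forall_isBounded_setIntegral_le {α : Type*} [PseudoMetricSpace α]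
    [ProperSpace α] [MeasurableSpace α] [OpensMeasurableSpace α] {μ : Measure α}
    [IsFiniteMeasureOnCompacts μ] {f : α → ℝ} (hf : LocallyIntegrable f μ) {c : ℝ}
    (h : ∀ s, MeasurableSet s → Bornology.IsBounded s → ∫ x in s, f x ∂μ ≤ c * μ.real s) :
    ∀ᵐ x ∂μ, f x ≤ c := by
  rcases isEmpty_or_nonempty α with _ | ⟨⟨x₀⟩⟩
  · exact ae_of_all _ isEmptyElim
  rw [← Measure.restrict_univ (μ := μ), ← iUnion_ball_nat x₀, ae_restrict_iUnion_iff]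
  intro n
  have hfn : IntegrableOn f (ball x₀ n) μ :=
    (hf.integrableOn_isCompact (isCompact_closedBall x₀ n)).mono_set ball_subset_closedBall
  have hcn : IntegrableOn (fun _ ↦ c) (ball x₀ n) μ := integrableOn_const measure_ball_lt_top.ne
  have hcf : 0 ≤ᵐ[μ.restrict (ball x₀ n)] fun x ↦ c - f x := by
    refine ae_nonneg_restrict_of_forall_setIntegral_nonneg_inter (hcn.sub hfn) fun s hs _ ↦ ?_
    rw [integral_sub (hcn.mono_set Set.inter_subset_right) (hfn.mono_set Set.inter_subset_right),
      setIntegral_const, smul_eq_mul, mul_comm, sub_nonneg]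
    exact h _ (hs.inter measurableSet_ball) (isBounded_ball.subset Set.inter_subset_right)
  filter_upwards [hcf] with x hx
  exact sub_nonneg.mp hx

section Translation

variable {E : Type*} [NormedAddCommGroup E] [MeasurableSpace E] [BorelSpace E]
  {μ : Measure E} [μ.IsAddRightInvariant]

theorem ae_restrict_ball_comp_sub_le_essSup {f : E → ℝ} {R r : ℝ}
    (hf : IsBoundedUnder (· ≤ ·) (ae (μ.restrict (ball 0 R)ᶜ)) f) {x : E} (hx : R + r ≤ ‖x‖) :
    ∀ᵐ y ∂μ.restrict (ball 0 r), f (y - x) ≤ essSup f (μ.restrict (ball 0 R)ᶜ) := by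
  have hT := (measurePreserving_sub_right μ x).quasiMeasurePreserving
  have hfar : ∀ᵐ y ∂μ, y - x ∈ (ball 0 R)ᶜ → f (y - x) ≤ essSup f (μ.restrict (ball 0 R)ᶜ) :=
    hT.tendsto_ae.eventually ((ae_restrict_iff' measurableSet_ball.compl).mp (ae_le_essSup hf))
  refine (ae_restrict_iff' measurableSet_ball).mpr (hfar.mono fun y hy hyr ↦ hy ?_)
  rw [Set.mem_compl_iff, mem_ball_zero_iff, not_lt]
  have hy_small := mem_ball_zero_iff.mp hyr
  linarith [norm_sub_norm_le x y, norm_sub_rev x y]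

theorem setIntegral_comp_sub_le_essSup_mul {f : E → ℝ} (hf : MemLp f ⊤ μ) {s : Set E} {R r : ℝ}
    (hs : s ⊆ ball 0 r) (hμs : μ s ≠ ∞) {x : E} (hx : R + r ≤ ‖x‖) :
    ∫ y in s, f (y - x) ∂μ ≤ essSup f (μ.restrict (ball 0 R)ᶜ) * μ.real s := by
  have : Fact (μ s < ∞) := ⟨hμs.lt_top⟩
  have hint : IntegrableOn (fun y ↦ f (y - x)) s μ :=
    ((hf.comp_measurePreserving (measurePreserving_sub_right μ x)).restrict s).integrable le_top
  have hbdd := (isBoundedUnder_le_abs.mp (hf.restrict (ball 0 R)ᶜ).isBoundedUnder_abs_ae).1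
  calc ∫ y in s, f (y - x) ∂μ ≤ ∫ _ in s, essSup f (μ.restrict (ball 0 R)ᶜ) ∂μ :=
        setIntegral_mono_ae_restrict hint (integrableOn_const hμs)
          (ae_restrict_of_ae_restrict_of_subset hs (ae_restrict_ball_comp_sub_le_essSup hbdd hx))
    _ = essSup f (μ.restrict (ball 0 R)ᶜ) * μ.real s := by
        rw [setIntegral_const, smul_eq_mul, mul_comm]

theorem le_mul_measureReal_of_tendsto_setIntegral_comp_sub {a : E → ℝ} (ha : MemLp a ⊤ μ)
    {aHat : ℝ} (hahat : Tendsto (fun R ↦ essSup a (μ.restrict (ball 0 R)ᶜ)) atTop (𝓝 aHat))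
    {x : ℕ → E} (hx : Tendsto (‖x ·‖) atTop atTop) {s : Set E} (hs : Bornology.IsBounded s)
    (hμs : μ s ≠ ∞) {L : ℝ} (hL : Tendsto (fun n ↦ ∫ y in s, a (y - x n) ∂μ) atTop (𝓝 L)) :
    L ≤ aHat * μ.real s := by
  obtain ⟨r, hr⟩ := hs.subset_ball 0
  have hL_le (R : ℝ) : L ≤ essSup a (μ.restrict (ball 0 R)ᶜ) * μ.real s :=
    le_of_tendsto hL <| (hx.eventually_ge_atTop (R + r)).mono fun n hn ↦
      setIntegral_comp_sub_le_essSup_mul ha hr hμs hn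
  exact ge_of_tendsto (hahat.mul_const _) (Eventually.of_forall hL_le)

end Translation

/-- If `â = lim_{R→∞} ess sup_{|x|>R} a` and `b` is a weak* limit of translates
`τ_{xₙ} a` with `|xₙ| → ∞`, then `ess sup b ≤ â`. -/
theorem stmt13 {N : ℕ} (a b : EuclideanSpace ℝ (Fin N) → ℝ)
    (ha : MemLp a ⊤ volume) (hb : MemLp b ⊤ volume) (aHat : ℝ)
    (hahat : Tendsto
      (fun R : ℝ => essSup a (volume.restrict (ball (0 : EuclideanSpace ℝ (Fin N)) R)ᶜ))
      atTop (𝓝 aHat))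
    (x : ℕ → EuclideanSpace ℝ (Fin N))
    (hx : Tendsto (fun n => ‖x n‖) atTop atTop)
    (hconv : ∀ φ : EuclideanSpace ℝ (Fin N) → ℝ, Integrable φ volume →
      Tendsto (fun n => ∫ y, a (y - x n) * φ y) atTop (𝓝 (∫ y, b y * φ y))) :
    essSup b volume ≤ aHat := by
  have hb_le : ∀ᵐ y ∂volume, b y ≤ aHat := by
    refine ae_le_of_forall_isBounded_setIntegral_le (hb.locallyIntegrable le_top)
      fun s hs hsb ↦ le_mul_measureReal_of_tendsto_setIntegral_comp_sub ha hahat hx hsb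
        hsb.measure_lt_top.ne ?_
    have hφ : Integrable (s.indicator 1) volume :=
      (integrable_indicator_iff hs).mpr (integrableOn_const (C := (1 : ℝ)) hsb.measure_lt_top.ne)
    simpa only [integral_mul_indicator_one hs] using hconv _ hφ
  exact essSup_le_of_ae_le aHat hb_le
    (isBoundedUnder_le_abs.mp hb.isBoundedUnder_abs_ae).2.isCoboundedUnder_le
end

section
/- If a sequence u_n ⇀ 0 weakly in H^s(ℝ^N) (0 < s < 1, N ≥ 3) satisfies sup_{x ∈ ℝ^N} ∫_{B(x,R)} |u_n|² → 0 as n → ∞ for some R > 0, then u_n → 0 strongly in L^q(ℝ^N) for every q with 2 < q < 2N/(N−2s). -/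
open MeasureTheory Filter Topology Metric
open scoped ENNReal NNReal

lemma sq0 {f g : ℕ → ℝ≥0∞} (h : ∀ᶠ n in atTop, f n ≤ g n)
    (hg : Tendsto g atTop (𝓝 0)) : Tendsto f atTop (𝓝 0) := by
  rw [ENNReal.tendsto_nhds_zero] at hg ⊢
  intro ε hε
  filter_upwards [h, hg ε hε] with n h1 h2 using h1.trans h2

lemma rpow_tendsto {f : ℕ → ℝ≥0∞} {c : ℝ} (hc : 0 < c)
    (h : Tendsto f atTop (𝓝 0)) : Tendsto (fun n => f n ^ c) atTop (𝓝 0) := by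
  have := (ENNReal.continuous_rpow_const (y := c)).tendsto 0
  have h2 := this.comp h
  simpa [Function.comp_def, ENNReal.zero_rpow_of_pos hc] using h2

lemma add_rpow_le (x y : ℝ≥0∞) {q : ℝ} (hq : 0 ≤ q) :
    (x + y) ^ q ≤ 2 ^ q * x ^ q + 2 ^ q * y ^ q := by
  have h1 : x + y ≤ 2 * max x y := by
    rcases max_cases x y with ⟨h, h'⟩ | ⟨h, h'⟩ <;> rw [h] <;> rw [two_mul] <;>
      [exact add_le_add le_rfl h'; exact add_le_add h'.le le_rfl]
  calc (x + y) ^ q ≤ (2 * max x y) ^ q := ENNReal.rpow_le_rpow h1 hq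
    _ = 2 ^ q * (max x y) ^ q := ENNReal.mul_rpow_of_nonneg _ _ hq
    _ ≤ 2 ^ q * (x ^ q + y ^ q) := by
        gcongr
        rcases max_cases x y with ⟨h, _⟩ | ⟨h, _⟩ <;> rw [h]
        · exact le_self_add
        · exact le_add_self
    _ = 2 ^ q * x ^ q + 2 ^ q * y ^ q := by ring

lemma pointwise_opt {σ β R : ℝ} (hσ : 0 < σ) (hβ : 0 < β) (hR : 0 < R)
    {X a b : ℝ≥0∞} (hb0 : b ≠ 0) (hbt : b ≠ ⊤)
    (h : ∀ r : ℝ, 0 < r → r ≤ R →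
      X * ENNReal.ofReal r ^ β ≤ a * ENNReal.ofReal r ^ (σ + β) + b) :
    X ≤ 2 * (a ^ (β / (σ + β)) * b ^ (σ / (σ + β))) + 2 * (b * ENNReal.ofReal R ^ (-β)) := by
  have hσβ : 0 < σ + β := by linarith
  have hR'0 : ENNReal.ofReal R ≠ 0 := (ENNReal.ofReal_pos.2 hR).ne'
  have hR't : ENNReal.ofReal R ≠ ⊤ := ENNReal.ofReal_ne_top
  by_cases hA : a * ENNReal.ofReal R ^ (σ + β) ≤ b
  · -- use r = R
    have h1 := h R hR le_rfl
    have h2 : X * ENNReal.ofReal R ^ β ≤ 2 * b := by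
      rw [two_mul]; exact h1.trans (add_le_add_left hA _)
    have hpow0 : ENNReal.ofReal R ^ β ≠ 0 := by
      simp [ENNReal.rpow_eq_zero_iff, hR'0, hR't]
    have hpowt : ENNReal.ofReal R ^ β ≠ ⊤ := by
      simp [ENNReal.rpow_eq_top_iff, hR'0, hR't]
    have hX : X ≤ 2 * b * ENNReal.ofReal R ^ (-β) := by
      rw [ENNReal.rpow_neg, ← div_eq_mul_inv,
        ENNReal.le_div_iff_mul_le (Or.inl hpow0) (Or.inl hpowt)]
      exact h2
    calc X ≤ 2 * b * ENNReal.ofReal R ^ (-β) := hX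
      _ = 2 * (b * ENNReal.ofReal R ^ (-β)) := by ring
      _ ≤ _ := le_add_self
  · push_neg at hA
    have ha0 : a ≠ 0 := by
      rintro rfl
      simp only [zero_mul] at hA
      exact (not_lt.2 (zero_le (a := b))) hA
    by_cases hat : a = ⊤
    · have htop : a ^ (β / (σ + β)) * b ^ (σ / (σ + β)) = ⊤ := by
        rw [hat, ENNReal.top_rpow_of_pos (by positivity)]
        rw [ENNReal.top_mul]
        simp [ENNReal.rpow_eq_zero_iff, hb0, hbt]
      rw [htop]
      simp
    · -- finite positive a, b
      set A := a.toReal with hAdef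
      set B := b.toReal with hBdef
      have hA0 : 0 < A := ENNReal.toReal_pos ha0 hat
      have hB0 : 0 < B := ENNReal.toReal_pos hb0 hbt
      have hae : a = ENNReal.ofReal A := (ENNReal.ofReal_toReal hat).symm
      have hbe : b = ENNReal.ofReal B := (ENNReal.ofReal_toReal hbt).symm
      set ρ := (B / A) ^ (1 / (σ + β)) with hρdef
      have hρ0 : 0 < ρ := by positivity
      have hρpow : ρ ^ (σ + β) = B / A := by
        rw [hρdef, ← Real.rpow_mul (by positivity), one_div,
          inv_mul_cancel₀ hσβ.ne', Real.rpow_one]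
      -- ρ < R
      have hρR : ρ ≤ R := by
        have h1 : B < A * R ^ (σ + β) := by
          have := hA
          rw [hae, hbe, ENNReal.ofReal_rpow_of_pos hR, ← ENNReal.ofReal_mul hA0.le] at this
          exact (ENNReal.ofReal_lt_ofReal_iff (by positivity)).1 this
        have h2 : B / A < R ^ (σ + β) := (div_lt_iff₀ hA0).2 (by linarith [h1])
        have h3 : ρ < (R ^ (σ + β)) ^ (1 / (σ + β)) := by
          rw [hρdef]
          exact Real.rpow_lt_rpow (by positivity) h2 (by positivity)
        rw [← Real.rpow_mul hR.le, mul_one_div, div_self hσβ.ne', Real.rpow_one] at h3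
        exact h3.le
      have h4 := h ρ hρ0 hρR
      -- a * ρ'^(σ+β) = b
      have h5 : a * ENNReal.ofReal ρ ^ (σ + β) = b := by
        rw [hae, hbe, ENNReal.ofReal_rpow_of_pos hρ0, hρpow, ← ENNReal.ofReal_mul hA0.le,
          mul_div_cancel₀ _ hA0.ne']
      rw [h5, ← two_mul] at h4
      -- divide by ρ'^β
      have hpow0 : ENNReal.ofReal ρ ^ β ≠ 0 := by
        simp [ENNReal.rpow_eq_zero_iff, (ENNReal.ofReal_pos.2 hρ0).ne', ENNReal.ofReal_ne_top]
      have hpowt : ENNReal.ofReal ρ ^ β ≠ ⊤ := by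
        simp [ENNReal.rpow_eq_top_iff, (ENNReal.ofReal_pos.2 hρ0).ne', ENNReal.ofReal_ne_top]
      have hX : X ≤ 2 * b * ENNReal.ofReal ρ ^ (-β) := by
        rw [ENNReal.rpow_neg, ← div_eq_mul_inv,
          ENNReal.le_div_iff_mul_le (Or.inl hpow0) (Or.inl hpowt)]
        exact h4
      -- identify 2 * b * ρ'^(-β) with target
      have hkey : b * ENNReal.ofReal ρ ^ (-β) = a ^ (β / (σ + β)) * b ^ (σ / (σ + β)) := by
        rw [hbe, hae, ENNReal.ofReal_rpow_of_pos hρ0, ENNReal.ofReal_rpow_of_pos hA0,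
          ENNReal.ofReal_rpow_of_pos hB0, ← ENNReal.ofReal_mul (by positivity),
          ← ENNReal.ofReal_mul (by positivity)]
        congr 1
        have e1 : ρ ^ (-β) = (B / A) ^ (-(β / (σ + β))) := by
          rw [hρdef, ← Real.rpow_mul (by positivity)]
          congr 1
          field_simp
        have e2 : (B / A) ^ (-(β / (σ + β)))
            = B ^ (-(β / (σ + β))) * A ^ (β / (σ + β)) := by
          rw [Real.div_rpow hB0.le hA0.le, div_eq_mul_inv, ← Real.rpow_neg hA0.le, neg_neg]
        have e4 : (1:ℝ) + -(β / (σ + β)) = σ / (σ + β) := by field_simp; ring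
        have e3 : B * (B ^ (-(β / (σ + β))) * A ^ (β / (σ + β)))
            = A ^ (β / (σ + β)) * B ^ (σ / (σ + β)) := by
          rw [← e4, Real.rpow_add hB0, Real.rpow_one]; ring
        rw [e1, e2, e3]
      calc X ≤ 2 * b * ENNReal.ofReal ρ ^ (-β) := hX
        _ = 2 * (b * ENNReal.ofReal ρ ^ (-β)) := by ring
        _ = 2 * (a ^ (β / (σ + β)) * b ^ (σ / (σ + β))) := by rw [hkey]
        _ ≤ _ := le_self_add

section
variable {N : ℕ}

local notation "E" => EuclideanSpace ℝ (Fin N)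

lemma emeas_rpow {α : Type*} [MeasurableSpace α] {f : α → ℝ≥0∞} (hf : Measurable f) (c : ℝ) :
    Measurable fun y => f y ^ c :=
  (ENNReal.continuous_rpow_const).measurable.comp hf


lemma unit_pow_mul {x : ℝ≥0∞} (h0 : x ≠ 0) (ht : x ≠ ⊤) {a b c : ℝ} (h : a + b = c) :
    x ^ a * x ^ b = x ^ c := by rw [← ENNReal.rpow_add _ _ h0 ht, h]

lemma star_ineq [NeZero N] {s p : ℝ} (hs0 : 0 < s) (hp : 1 < p)
    {v : E → ℝ} (hv : Measurable v)
    (x : E) {r : ℝ} (hr : 0 < r) :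
    (‖v x‖₊ : ℝ≥0∞) * ENNReal.ofReal r ^ ((N : ℝ) / p)
      ≤ (∫⁻ y, (‖v x - v y‖₊ : ℝ≥0∞) ^ (2:ℝ) / edist x y ^ ((N:ℝ) + 2*s)) ^ (1/2 : ℝ)
          * (volume (ball (0:E) 1)) ^ (-(1/2) : ℝ) * ENNReal.ofReal r ^ (s + (N:ℝ)/p)
        + (∫⁻ y in ball x r, ((‖v y‖₊ : ℝ≥0∞)) ^ p) ^ (1/p)
          * (volume (ball (0:E) 1)) ^ (-(1/p) : ℝ) := by
  classical
  set κ := ENNReal.ofReal r with hκdef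
  have hκ0 : κ ≠ 0 := (ENNReal.ofReal_pos.2 hr).ne'
  have hκt : κ ≠ ⊤ := ENNReal.ofReal_ne_top
  set c₀ := volume (ball (0:E) 1) with hc₀def
  have hc₀0 : c₀ ≠ 0 := (measure_ball_pos _ _ one_pos).ne'
  have hc₀t : c₀ ≠ ⊤ := measure_ball_lt_top.ne
  set G := ∫⁻ y, (‖v x - v y‖₊ : ℝ≥0∞) ^ (2:ℝ) / edist x y ^ ((N:ℝ) + 2*s) with hGdef
  set D := ∫⁻ y in ball x r, ((‖v y‖₊ : ℝ≥0∞)) ^ p with hDdef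
  set w : E → ℝ≥0∞ := fun y => edist x y ^ ((N:ℝ) + 2*s) with hwdef
  have hNs : (0:ℝ) < (N:ℝ) + 2*s := by
    have : (0:ℝ) < N := by exact_mod_cast Nat.pos_of_ne_zero (NeZero.ne N)
    linarith
  have hw_meas : Measurable w := emeas_rpow (measurable_const.edist measurable_id) _
  have hvol : volume (ball x r) = κ ^ (N:ℝ) * c₀ := by
    rw [Measure.addHaar_ball volume x hr.le, finrank_euclideanSpace_fin,
      ENNReal.ofReal_pow hr.le, ← ENNReal.rpow_natCast]
  have hsub_meas : Measurable fun y => ((‖v x - v y‖₊ : ℝ≥0∞)) :=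
    (measurable_const.sub hv).nnnorm.coe_nnreal_ennreal
  have hv_meas : Measurable fun y => ((‖v y‖₊ : ℝ≥0∞)) := hv.nnnorm.coe_nnreal_ennreal
  -- step 1
  have step1 : (‖v x‖₊ : ℝ≥0∞) * (κ ^ (N:ℝ) * c₀)
      ≤ (∫⁻ y in ball x r, (‖v x - v y‖₊ : ℝ≥0∞))
        + ∫⁻ y in ball x r, (‖v y‖₊ : ℝ≥0∞) := by
    rw [← hvol]
    calc (‖v x‖₊ : ℝ≥0∞) * volume (ball x r) = ∫⁻ _ in ball x r, (‖v x‖₊ : ℝ≥0∞) :=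
          (setLIntegral_const _ _).symm
      _ ≤ ∫⁻ y in ball x r, ((‖v x - v y‖₊ : ℝ≥0∞) + (‖v y‖₊ : ℝ≥0∞)) := by
          refine lintegral_mono fun y => ?_
          have h := nnnorm_add_le (v x - v y) (v y)
          rw [sub_add_cancel] at h
          have h' := ENNReal.coe_le_coe.2 h
          push_cast at h'
          exact h'
      _ = _ := lintegral_add_left hsub_meas _
  -- step 2 : Cauchy-Schwarz for the difference term
  have conj2 : Real.HolderConjugate 2 2 := Real.holderConjugate_iff.2 ⟨one_lt_two, by norm_num⟩
  have step2 : (∫⁻ y in ball x r, (‖v x - v y‖₊ : ℝ≥0∞))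
      ≤ G ^ (1/2 : ℝ) * (κ ^ ((N:ℝ) + 2*s) * (κ ^ (N:ℝ) * c₀)) ^ (1/2 : ℝ) := by
    set f : E → ℝ≥0∞ := fun y => ((‖v x - v y‖₊ : ℝ≥0∞) ^ (2:ℝ) / w y) ^ (1/2 : ℝ) with hfdef
    set g : E → ℝ≥0∞ := fun y => (w y) ^ (1/2 : ℝ) with hgdef
    have hf_meas : Measurable f := emeas_rpow ((emeas_rpow hsub_meas _).div hw_meas) _
    have hg_meas : Measurable g := emeas_rpow hw_meas _
    have hae : ∀ᵐ y ∂(volume.restrict (ball x r)),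
        ((‖v x - v y‖₊ : ℝ≥0∞)) = (f * g) y := by
      refine ae_restrict_of_ae ?_
      have hxae : ∀ᵐ y ∂(volume : Measure E), y ≠ x := by
        rw [ae_iff]
        simp only [ne_eq, not_not, Set.setOf_eq_eq_singleton']
        exact measure_singleton x
      filter_upwards [hxae] with y hy
      have he0 : edist x y ≠ 0 := by
        simp [edist_eq_zero]
        exact Ne.symm hy
      have het : edist x y ≠ ⊤ := edist_ne_top _ _
      have hw0 : w y ≠ 0 := by
        simp [hwdef, ENNReal.rpow_eq_zero_iff, he0, het]
      have hwt : w y ≠ ⊤ := by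
        simp [hwdef, ENNReal.rpow_eq_top_iff, he0, het]
      show ((‖v x - v y‖₊ : ℝ≥0∞)) = f y * g y
      rw [hfdef, hgdef]
      simp only
      rw [← ENNReal.mul_rpow_of_nonneg _ _ (by norm_num : (0:ℝ) ≤ 1/2),
        ENNReal.div_mul_cancel hw0 hwt, ← ENNReal.rpow_mul]
      norm_num
    calc (∫⁻ y in ball x r, (‖v x - v y‖₊ : ℝ≥0∞))
        = ∫⁻ y in ball x r, (f * g) y := lintegral_congr_ae hae
      _ ≤ (∫⁻ y in ball x r, f y ^ (2:ℝ)) ^ (1/2:ℝ) * (∫⁻ y in ball x r, g y ^ (2:ℝ)) ^ (1/2:ℝ) :=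
          ENNReal.lintegral_mul_le_Lp_mul_Lq _ conj2 hf_meas.aemeasurable hg_meas.aemeasurable
      _ ≤ G ^ (1/2 : ℝ) * (κ ^ ((N:ℝ) + 2*s) * (κ ^ (N:ℝ) * c₀)) ^ (1/2 : ℝ) := by
          gcongr
          · -- ∫ f^2 ≤ G
            have hfe : ∀ y, f y ^ (2:ℝ) = (‖v x - v y‖₊ : ℝ≥0∞) ^ (2:ℝ) / w y := by
              intro y
              rw [hfdef]
              simp only
              rw [← ENNReal.rpow_mul]
              norm_num
            calc (∫⁻ y in ball x r, f y ^ (2:ℝ))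
                = ∫⁻ y in ball x r, (‖v x - v y‖₊ : ℝ≥0∞) ^ (2:ℝ) / w y := by
                  simp only [hfe]
              _ ≤ G := setLIntegral_le_lintegral _ _
          · -- ∫ g^2 ≤ κ^(N+2s) * vol
            have hge : ∀ y, g y ^ (2:ℝ) = w y := by
              intro y
              rw [hgdef]
              simp only
              rw [← ENNReal.rpow_mul]
              norm_num
            calc (∫⁻ y in ball x r, g y ^ (2:ℝ)) = ∫⁻ y in ball x r, w y := by simp only [hge]
              _ ≤ ∫⁻ _ in ball x r, κ ^ ((N:ℝ) + 2*s) := by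
                  refine setLIntegral_mono measurable_const fun y hy => ?_
                  refine ENNReal.rpow_le_rpow ?_ hNs.le
                  rw [hκdef]
                  refine le_of_lt (edist_lt_ofReal.2 ?_)
                  rw [dist_comm]
                  exact mem_ball.1 hy
              _ = κ ^ ((N:ℝ) + 2*s) * (κ ^ (N:ℝ) * c₀) := by rw [setLIntegral_const, hvol]
  -- step 3 : Hölder for the second term
  have conjp : Real.HolderConjugate p (p/(p-1)) := Real.HolderConjugate.conjExponent hp
  have hexp : (1:ℝ)/(p/(p-1)) = 1 - 1/p := by
    rw [one_div_div]
    field_simp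
  have step3 : (∫⁻ y in ball x r, (‖v y‖₊ : ℝ≥0∞))
      ≤ D ^ (1/p : ℝ) * (κ ^ (N:ℝ) * c₀) ^ (1 - 1/p : ℝ) := by
    have h0 := ENNReal.lintegral_mul_le_Lp_mul_Lq (volume.restrict (ball x r)) conjp
      hv_meas.aemeasurable (measurable_const (a := (1:ℝ≥0∞))).aemeasurable
    simp only [Pi.mul_apply, mul_one, one_mul, ENNReal.one_rpow, lintegral_const,
      Measure.restrict_apply MeasurableSet.univ, Set.univ_inter] at h0
    rw [hvol, hexp] at h0
    exact h0
  -- step 4 : combine and divide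
  set T := κ ^ ((N:ℝ) - (N:ℝ)/p) * c₀ with hTdef
  have hT0 : T ≠ 0 := by
    simp [hTdef, ENNReal.rpow_eq_zero_iff, hκ0, hκt, hc₀0]
  have hTt : T ≠ ⊤ := by
    simp [hTdef, ENNReal.mul_eq_top, ENNReal.rpow_eq_top_iff, hκ0, hκt, hc₀t]
  refine (ENNReal.mul_le_mul_iff_left hT0 hTt).1 ?_
  have e1 : (κ ^ ((N:ℝ) + 2*s) * (κ ^ (N:ℝ) * c₀)) ^ (1/2 : ℝ)
      = κ ^ ((N:ℝ) + s) * c₀ ^ (1/2 : ℝ) := by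
    rw [← mul_assoc, unit_pow_mul hκ0 hκt (show (N:ℝ) + 2*s + N = 2*((N:ℝ)+s) by ring),
      ENNReal.mul_rpow_of_nonneg _ _ (by norm_num : (0:ℝ) ≤ 1/2), ← ENNReal.rpow_mul]
    congr 1
    ring
  have e2 : (κ ^ (N:ℝ) * c₀) ^ (1 - 1/p : ℝ)
      = κ ^ ((N:ℝ) - (N:ℝ)/p) * c₀ ^ (1 - 1/p : ℝ) := by
    have h1p : (0:ℝ) ≤ 1 - 1/p := by
      have : 1/p < 1 := by
        rw [div_lt_one (by linarith)]
        linarith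
      linarith
    rw [ENNReal.mul_rpow_of_nonneg _ _ h1p, ← ENNReal.rpow_mul]
    congr 2
    ring
  have e3 : κ ^ (s + (N:ℝ)/p) * κ ^ ((N:ℝ) - (N:ℝ)/p) = κ ^ ((N:ℝ) + s) :=
    unit_pow_mul hκ0 hκt (by ring)
  have e4 : c₀ ^ (-(1/2) : ℝ) * c₀ = c₀ ^ (1/2 : ℝ) := by
    nth_rewrite 2 [← ENNReal.rpow_one c₀]
    exact unit_pow_mul hc₀0 hc₀t (by norm_num)
  have e5 : c₀ ^ (-(1/p) : ℝ) * c₀ = c₀ ^ (1 - 1/p : ℝ) := by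
    nth_rewrite 2 [← ENNReal.rpow_one c₀]
    exact unit_pow_mul hc₀0 hc₀t (by ring)
  calc (‖v x‖₊ : ℝ≥0∞) * κ ^ ((N:ℝ)/p) * T
      = (‖v x‖₊ : ℝ≥0∞) * (κ ^ (N:ℝ) * c₀) := by
        rw [hTdef, show ((‖v x‖₊ : ℝ≥0∞) * κ ^ ((N:ℝ)/p)) * (κ ^ ((N:ℝ) - (N:ℝ)/p) * c₀)
          = (‖v x‖₊ : ℝ≥0∞) * ((κ ^ ((N:ℝ)/p) * κ ^ ((N:ℝ) - (N:ℝ)/p)) * c₀) from by ring,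
          unit_pow_mul hκ0 hκt (show (N:ℝ)/p + ((N:ℝ) - (N:ℝ)/p) = (N:ℝ) by ring)]
    _ ≤ (∫⁻ y in ball x r, (‖v x - v y‖₊ : ℝ≥0∞)) + ∫⁻ y in ball x r, (‖v y‖₊ : ℝ≥0∞) := step1
    _ ≤ G ^ (1/2 : ℝ) * (κ ^ ((N:ℝ) + 2*s) * (κ ^ (N:ℝ) * c₀)) ^ (1/2 : ℝ)
        + D ^ (1/p : ℝ) * (κ ^ (N:ℝ) * c₀) ^ (1 - 1/p : ℝ) := add_le_add step2 step3
    _ = (G ^ (1/2 : ℝ) * c₀ ^ (-(1/2) : ℝ) * κ ^ (s + (N:ℝ)/p)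
        + D ^ (1/p : ℝ) * c₀ ^ (-(1/p) : ℝ)) * T := by
        rw [e1, e2, hTdef, add_mul]
        congr 1
        · rw [show G ^ (1/2:ℝ) * c₀ ^ (-(1/2):ℝ) * κ ^ (s + (N:ℝ)/p)
              * (κ ^ ((N:ℝ) - (N:ℝ)/p) * c₀)
            = G ^ (1/2:ℝ) * ((κ ^ (s + (N:ℝ)/p) * κ ^ ((N:ℝ) - (N:ℝ)/p))
              * (c₀ ^ (-(1/2):ℝ) * c₀)) from by ring, e3, e4]
        · rw [show D ^ (1/p:ℝ) * c₀ ^ (-(1/p):ℝ) * (κ ^ ((N:ℝ) - (N:ℝ)/p) * c₀)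
            = D ^ (1/p:ℝ) * (κ ^ ((N:ℝ) - (N:ℝ)/p) * (c₀ ^ (-(1/p):ℝ) * c₀)) from by ring, e5]

lemma emeas_rpow' {α : Type*} [MeasurableSpace α] {f : α → ℝ≥0∞} (hf : Measurable f) (c : ℝ) :
    Measurable fun y => f y ^ c :=
  (ENNReal.continuous_rpow_const).measurable.comp hf

-- measurability of x ↦ ∫⁻ y in ball x R, f y
lemma meas_ball_lintegral {f : E → ℝ≥0∞} (hf : Measurable f) (R : ℝ) :
    Measurable fun x : E => ∫⁻ y in ball x R, f y := by
  have h1 : ∀ x : E, (∫⁻ y in ball x R, f y)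
      = ∫⁻ y, (ball x R).indicator f y := by
    intro x
    rw [lintegral_indicator measurableSet_ball]
  simp only [h1]
  refine Measurable.lintegral_prod_right (f := fun x y => (ball x R).indicator f y) ?_
  have : (Function.uncurry fun x y => (ball x R).indicator f y)
      = fun z : E × E => if dist z.2 z.1 < R then f z.2 else 0 := by
    funext z
    classical
    show (ball z.1 R).indicator f z.2 = _
    rw [Set.indicator_apply]
    simp [mem_ball]
  rw [this]
  refine Measurable.ite ?_ (hf.comp measurable_snd) measurable_const
  have : IsOpen {z : E × E | dist z.2 z.1 < R} :=
    isOpen_lt (continuous_dist.comp (continuous_snd.prodMk continuous_fst)) continuous_const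
  exact this.measurableSet

lemma meas_gagliardo {s : ℝ} {v : E → ℝ} (hv : Measurable v) :
    Measurable fun x : E => ∫⁻ y, (‖v x - v y‖₊ : ℝ≥0∞) ^ (2:ℝ) / edist x y ^ ((N:ℝ) + 2*s) := by
  refine Measurable.lintegral_prod_right ?_
  refine Measurable.div ?_ ?_
  · exact emeas_rpow' (((hv.comp measurable_fst).sub (hv.comp measurable_snd)).nnnorm.coe_nnreal_ennreal) _
  · exact emeas_rpow' measurable_edist _

-- needed lemmas recorded earlier compile; now key estimate
lemma key_est [NeZero N] {s p R : ℝ} (hs0 : 0 < s) (hp2 : 2 ≤ p) (hR : 0 < R)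
    (hqp : p < 2 + 2*s*p/N) :
    ∃ C : ℝ≥0∞, C ≠ ⊤ ∧ ∀ (v : E → ℝ), Measurable v → ∀ ε : ℝ≥0∞, ε ≠ ⊤ →
      (∀ x, (∫⁻ y in ball x R, (‖v y‖₊ : ℝ≥0∞) ^ p) ≤ ε) →
      (∫⁻ x, (‖v x‖₊ : ℝ≥0∞) ^ (2 + 2*s*p/N))
        ≤ C * (ε ^ (2*s/(N:ℝ))
              * ∫⁻ x, ∫⁻ y, (‖v x - v y‖₊:ℝ≥0∞) ^ (2:ℝ) / edist x y ^ ((N:ℝ)+2*s))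
          + C * (ε ^ ((2 + 2*s*p/N)/p - 1)
              * ∫⁻ x, ∫⁻ y in ball x R, (‖v y‖₊:ℝ≥0∞) ^ p) := by
  classical
  have hN0 : (0:ℝ) < N := by exact_mod_cast Nat.pos_of_ne_zero (NeZero.ne N)
  have hp0 : (0:ℝ) < p := by linarith
  have hp1 : (1:ℝ) < p := by linarith
  set q : ℝ := 2 + 2*s*p/N with hqdef
  have hq0 : (0:ℝ) < q := by
    have : 0 < 2*s*p/N := by positivity
    rw [hqdef]; linarith
  set c₀ := volume (ball (0:E) 1) with hc₀def
  have hc₀0 : c₀ ≠ 0 := (measure_ball_pos _ _ one_pos).ne'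
  have hc₀t : c₀ ≠ ⊤ := measure_ball_lt_top.ne
  set R' := ENNReal.ofReal R with hR'def
  have hR'0 : R' ≠ 0 := (ENNReal.ofReal_pos.2 hR).ne'
  have hR't : R' ≠ ⊤ := ENNReal.ofReal_ne_top
  set β : ℝ := (N:ℝ)/p with hβdef
  have hβ0 : 0 < β := by positivity
  have hσβ : (0:ℝ) < s + β := by positivity
  -- the constants
  set C₁ : ℝ≥0∞ := 4 ^ q * c₀ ^ (-(1 + 2*s/(N:ℝ))) with hC₁def
  set C₂ : ℝ≥0∞ := 4 ^ q * c₀ ^ (-(q/p)) * R' ^ (-(β*q)) with hC₂def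
  have hC₁t : C₁ ≠ ⊤ := by
    refine ENNReal.mul_ne_top ?_ ?_
    · exact (ENNReal.rpow_ne_top_of_nonneg hq0.le (by norm_num))
    · simp [ENNReal.rpow_eq_top_iff, hc₀0, hc₀t]
  have hC₂t : C₂ ≠ ⊤ := by
    refine ENNReal.mul_ne_top (ENNReal.mul_ne_top ?_ ?_) ?_
    · exact (ENNReal.rpow_ne_top_of_nonneg hq0.le (by norm_num))
    · simp [ENNReal.rpow_eq_top_iff, hc₀0, hc₀t]
    · simp [ENNReal.rpow_eq_top_iff, hR'0, hR't]
  refine ⟨C₁ + C₂, ENNReal.add_ne_top.2 ⟨hC₁t, hC₂t⟩, ?_⟩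
  intro v hv ε hεt hεx
  set Gf : E → ℝ≥0∞ :=
    fun x => ∫⁻ y, (‖v x - v y‖₊:ℝ≥0∞) ^ (2:ℝ) / edist x y ^ ((N:ℝ)+2*s) with hGfdef
  set Df : E → ℝ≥0∞ := fun x => ∫⁻ y in ball x R, (‖v y‖₊ : ℝ≥0∞) ^ p with hDfdef
  have hv_meas : Measurable fun y => ((‖v y‖₊ : ℝ≥0∞)) := hv.nnnorm.coe_nnreal_ennreal
  have hGmeas : Measurable Gf := meas_gagliardo hv
  have hDmeas : Measurable Df := meas_ball_lintegral (emeas_rpow' hv_meas p) R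
  set S : Set E := {x | Df x = 0} with hSdef
  have hS : MeasurableSet S := hDmeas (measurableSet_singleton 0)
  -- the integral over S vanishes
  have hSint : ∫⁻ x in S, (‖v x‖₊ : ℝ≥0∞) ^ q = 0 := by
    have hball : ∀ z : E, Df z = 0 → volume ({y | v y ≠ 0} ∩ ball z R) = 0 := by
      intro z hz
      have h1 : (fun y => (‖v y‖₊ : ℝ≥0∞) ^ p) =ᵐ[volume.restrict (ball z R)] 0 :=
        (lintegral_eq_zero_iff (emeas_rpow' hv_meas p)).1 hz
      have h2 : ∀ᵐ y ∂volume, y ∈ ball z R → (‖v y‖₊ : ℝ≥0∞) ^ p = 0 :=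
        (ae_restrict_iff' measurableSet_ball).1 h1
      rw [ae_iff] at h2
      refine measure_mono_null ?_ h2
      intro y hy
      simp only [Set.mem_setOf_eq, not_forall]
      refine ⟨hy.2, ?_⟩
      have : (‖v y‖₊ : ℝ≥0∞) ≠ 0 := by
        simpa using hy.1
      simp [ENNReal.rpow_eq_zero_iff, this, hp0, hp0.not_gt]
    obtain ⟨Tset, hTc, hTeq⟩ := TopologicalSpace.isOpen_iUnion_countable
      (ι := S) (fun z => ball (z:E) R) (fun z => isOpen_ball)
    have hUnull : volume ({y | v y ≠ 0} ∩ ⋃ z : S, ball (z:E) R) = 0 := by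
      rw [← hTeq, Set.inter_iUnion₂]
      refine (measure_biUnion_null_iff hTc).2 fun z _ => hball z z.2
    rw [lintegral_eq_zero_iff (emeas_rpow' hv_meas q)]
    rw [EventuallyEq, ae_restrict_iff' hS]
    rw [ae_iff]
    refine measure_mono_null ?_ hUnull
    intro x hx
    simp only [Set.mem_setOf_eq, not_forall] at hx
    obtain ⟨hxS, hxne⟩ := hx
    constructor
    · simp only [Set.mem_setOf_eq]
      intro hvx
      exact hxne (by simp [hvx, ENNReal.zero_rpow_of_pos hq0])
    · exact Set.mem_iUnion.2 ⟨⟨x, hxS⟩, mem_ball_self hR⟩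
  -- pointwise bound off S
  have hpt : ∀ x : E, Df x ≠ 0 →
      (‖v x‖₊ : ℝ≥0∞) ^ q ≤ C₁ * (ε ^ (2*s/(N:ℝ)) * Gf x) + C₂ * (ε ^ (q/p - 1) * Df x) := by
    intro x hDx0
    have hDxt : Df x ≠ ⊤ := (lt_of_le_of_lt (hεx x) (lt_top_iff_ne_top.2 hεt)).ne
    set a : ℝ≥0∞ := (Gf x) ^ (1/2:ℝ) * c₀ ^ (-(1/2):ℝ) with hadef
    set b : ℝ≥0∞ := (Df x) ^ (1/p:ℝ) * c₀ ^ (-(1/p):ℝ) with hbdef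
    have hb0 : b ≠ 0 := by
      refine mul_ne_zero ?_ ?_
      · simp [ENNReal.rpow_eq_zero_iff, hDx0, hDxt]
      · simp [ENNReal.rpow_eq_zero_iff, hc₀0, hc₀t]
    have hbt : b ≠ ⊤ := by
      refine ENNReal.mul_ne_top ?_ ?_
      · simp [ENNReal.rpow_eq_top_iff, hDx0, hDxt]
      · simp [ENNReal.rpow_eq_top_iff, hc₀0, hc₀t]
    have hyp : ∀ r : ℝ, 0 < r → r ≤ R →
        (‖v x‖₊ : ℝ≥0∞) * ENNReal.ofReal r ^ β ≤ a * ENNReal.ofReal r ^ (s + β) + b := by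
      intro r hr hrR
      refine (star_ineq hs0 hp1 hv x hr).trans ?_
      have hsecond : (∫⁻ y in ball x r, (‖v y‖₊:ℝ≥0∞) ^ p) ^ (1/p:ℝ) * c₀ ^ (-(1/p):ℝ) ≤ b := by
        rw [hbdef]
        gcongr
        exact lintegral_mono_set (ball_subset_ball hrR)
      exact add_le_add (le_of_eq rfl) hsecond
    have hopt := pointwise_opt hs0 hβ0 hR hb0 hbt hyp
    -- raise to the power q
    have h2 := ENNReal.rpow_le_rpow hopt hq0.le
    refine h2.trans ?_
    refine (add_rpow_le _ _ hq0.le).trans ?_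
    have e1 : (2 * (a ^ (β / (s + β)) * b ^ (s / (s + β)))) ^ q
        ≤ 2 ^ q * (c₀ ^ (-(1:ℝ)) * Gf x * (c₀ ^ (-(2*s/(N:ℝ))) * ε ^ (2*s/(N:ℝ)))) := by
      rw [ENNReal.mul_rpow_of_nonneg _ _ hq0.le]
      gcongr 2 ^ q * ?_
      rw [ENNReal.mul_rpow_of_nonneg _ _ hq0.le]
      rw [← ENNReal.rpow_mul a, ← ENNReal.rpow_mul b]
      have ea : β / (s + β) * q = 2 := by
        rw [hβdef, hqdef]
        field_simp
        ring
      have eb : s / (s + β) * q = 2*s*p/(N:ℝ) := by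
        rw [hβdef, hqdef]
        field_simp
        ring
      rw [ea, eb]
      have ha2 : a ^ (2:ℝ) = Gf x * c₀ ^ (-(1:ℝ)) := by
        rw [hadef, ENNReal.mul_rpow_of_nonneg _ _ (by norm_num : (0:ℝ) ≤ 2),
          ← ENNReal.rpow_mul, ← ENNReal.rpow_mul]
        norm_num
      have hb2 : b ^ (2*s*p/(N:ℝ)) ≤ ε ^ (2*s/(N:ℝ)) * c₀ ^ (-(2*s/(N:ℝ))) := by
        rw [hbdef, ENNReal.mul_rpow_of_nonneg _ _ (by positivity : (0:ℝ) ≤ 2*s*p/(N:ℝ)),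
          ← ENNReal.rpow_mul, ← ENNReal.rpow_mul]
        have e2 : (1/p) * (2*s*p/(N:ℝ)) = 2*s/(N:ℝ) := by field_simp <;> ring
        have e3 : (-(1/p)) * (2*s*p/(N:ℝ)) = -(2*s/(N:ℝ)) := by field_simp <;> ring
        rw [e2, e3]
        gcongr
        exact hεx x
      calc a ^ (2:ℝ) * b ^ (2*s*p/(N:ℝ))
          ≤ (Gf x * c₀ ^ (-(1:ℝ))) * (ε ^ (2*s/(N:ℝ)) * c₀ ^ (-(2*s/(N:ℝ)))) := by
            rw [ha2]; gcongr
        _ = c₀ ^ (-(1:ℝ)) * Gf x * (c₀ ^ (-(2*s/(N:ℝ))) * ε ^ (2*s/(N:ℝ))) := by ring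
    have e2 : (2 * (b * R' ^ (-β))) ^ q
        ≤ 2 ^ q * (c₀ ^ (-(q/p)) * R' ^ (-(β*q)) * (ε ^ (q/p - 1) * Df x)) := by
      rw [ENNReal.mul_rpow_of_nonneg _ _ hq0.le]
      gcongr 2 ^ q * ?_
      rw [ENNReal.mul_rpow_of_nonneg _ _ hq0.le]
      have hRq : (R' ^ (-β)) ^ q = R' ^ (-(β*q)) := by
        rw [← ENNReal.rpow_mul]
        congr 1
        ring
      have hbq : b ^ q ≤ ε ^ (q/p - 1) * Df x * c₀ ^ (-(q/p)) := by
        rw [hbdef, ENNReal.mul_rpow_of_nonneg _ _ hq0.le, ← ENNReal.rpow_mul,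
          ← ENNReal.rpow_mul]
        have e4 : (1/p) * q = q/p := by ring
        have e5 : (-(1/p)) * q = -(q/p) := by ring
        rw [e4, e5]
        gcongr ?_ * _
        have hqp1 : (0:ℝ) ≤ q/p - 1 := by
          have : 1 ≤ q/p := by
            rw [le_div_iff₀ hp0]
            linarith
          linarith
        have hsplit : (Df x) ^ (q/p - 1) * Df x = (Df x) ^ (q/p) := by
          nth_rewrite 2 [← ENNReal.rpow_one (Df x)]
          rw [← ENNReal.rpow_add _ _ hDx0 hDxt]
          congr 1
          ring
        rw [← hsplit]
        exact mul_le_mul_left (ENNReal.rpow_le_rpow (hεx x) hqp1) _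
      calc b ^ q * (R' ^ (-β)) ^ q ≤ (ε ^ (q/p - 1) * Df x * c₀ ^ (-(q/p))) * R' ^ (-(β*q)) := by
            rw [hRq]; gcongr
        _ = c₀ ^ (-(q/p)) * R' ^ (-(β*q)) * (ε ^ (q/p - 1) * Df x) := by ring
    calc 2 ^ q * (2 * (a ^ (β / (s + β)) * b ^ (s / (s + β)))) ^ q
          + 2 ^ q * (2 * (b * R' ^ (-β))) ^ q
        ≤ 2 ^ q * (2 ^ q * (c₀ ^ (-(1:ℝ)) * Gf x * (c₀ ^ (-(2*s/(N:ℝ))) * ε ^ (2*s/(N:ℝ)))))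
          + 2 ^ q * (2 ^ q * (c₀ ^ (-(q/p)) * R' ^ (-(β*q)) * (ε ^ (q/p - 1) * Df x))) := by
          gcongr
      _ = C₁ * (ε ^ (2*s/(N:ℝ)) * Gf x) + C₂ * (ε ^ (q/p - 1) * Df x) := by
          rw [hC₁def, hC₂def]
          have h4 : (4:ℝ≥0∞) ^ q = 2 ^ q * 2 ^ q := by
            rw [← ENNReal.mul_rpow_of_nonneg _ _ hq0.le]
            norm_num
          rw [h4]
          have hcc : c₀ ^ (-(1:ℝ)) * c₀ ^ (-(2*s/(N:ℝ))) = c₀ ^ (-(1 + 2*s/(N:ℝ))) := by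
            rw [← ENNReal.rpow_add _ _ hc₀0 hc₀t]
            congr 1
            ring
          rw [← hcc]
          ring
  -- integrate
  have hsplit := (lintegral_add_compl (μ := volume) (fun x => (‖v x‖₊ : ℝ≥0∞) ^ q) hS).symm
  have hrhs_meas : Measurable fun x =>
      C₁ * (ε ^ (2*s/(N:ℝ)) * Gf x) + C₂ * (ε ^ (q/p - 1) * Df x) :=
    ((measurable_const.mul (measurable_const.mul hGmeas))).add
      ((measurable_const.mul (measurable_const.mul hDmeas)))
  calc ∫⁻ x, (‖v x‖₊ : ℝ≥0∞) ^ q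
      = (∫⁻ x in S, (‖v x‖₊ : ℝ≥0∞) ^ q) + ∫⁻ x in Sᶜ, (‖v x‖₊ : ℝ≥0∞) ^ q := hsplit
    _ = ∫⁻ x in Sᶜ, (‖v x‖₊ : ℝ≥0∞) ^ q := by rw [hSint, zero_add]
    _ ≤ ∫⁻ x in Sᶜ, (C₁ * (ε ^ (2*s/(N:ℝ)) * Gf x) + C₂ * (ε ^ (q/p - 1) * Df x)) := by
        refine setLIntegral_mono hrhs_meas fun x hx => ?_
        exact hpt x (by simpa [hSdef] using hx)
    _ ≤ ∫⁻ x, (C₁ * (ε ^ (2*s/(N:ℝ)) * Gf x) + C₂ * (ε ^ (q/p - 1) * Df x)) :=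
        setLIntegral_le_lintegral _ _
    _ = C₁ * (ε ^ (2*s/(N:ℝ)) * ∫⁻ x, Gf x) + C₂ * (ε ^ (q/p - 1) * ∫⁻ x, Df x) := by
        rw [lintegral_add_left (f := fun x => C₁ * (ε ^ (2*s/(N:ℝ)) * Gf x)) (measurable_const.mul (measurable_const.mul hGmeas))]
        rw [lintegral_const_mul (f := fun x => ε ^ (2*s/(N:ℝ)) * Gf x) _ (measurable_const.mul hGmeas),
          lintegral_const_mul _ hGmeas,
          lintegral_const_mul (f := fun x => ε ^ (q/p - 1) * Df x) _ (measurable_const.mul hDmeas),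
          lintegral_const_mul _ hDmeas]
    _ ≤ (C₁ + C₂) * (ε ^ (2*s/(N:ℝ)) * ∫⁻ x, Gf x)
        + (C₁ + C₂) * (ε ^ (q/p - 1) * ∫⁻ x, Df x) := by
        gcongr
        · exact le_self_add
        · exact le_add_self

lemma integral_Df {f : E → ℝ≥0∞} (hf : Measurable f) (R : ℝ) :
    ∫⁻ x, (∫⁻ y in ball x R, f y) = volume (ball (0:E) R) * ∫⁻ y, f y := by
  classical
  have h1 : ∀ x : E, (∫⁻ y in ball x R, f y) = ∫⁻ y, (ball x R).indicator f y := by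
    intro x
    rw [lintegral_indicator measurableSet_ball]
  simp only [h1]
  have hmeas : Measurable (Function.uncurry fun x y : E => (ball x R).indicator f y) := by
    have : (Function.uncurry fun x y : E => (ball x R).indicator f y)
        = fun z : E × E => if dist z.2 z.1 < R then f z.2 else 0 := by
      funext z
      show (ball z.1 R).indicator f z.2 = _
      rw [Set.indicator_apply]
      simp [mem_ball]
    rw [this]
    refine Measurable.ite ?_ (hf.comp measurable_snd) measurable_const
    exact (isOpen_lt (continuous_dist.comp (continuous_snd.prodMk continuous_fst))
      continuous_const).measurableSet
  rw [lintegral_lintegral_swap hmeas.aemeasurable]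
  have h2 : ∀ y : E, (∫⁻ x, (ball x R).indicator f y) = f y * volume (ball (0:E) R) := by
    intro y
    have h3 : ∀ x : E, (ball x R).indicator f y = (ball y R).indicator (fun _ => f y) x := by
      intro x
      rw [Set.indicator_apply, Set.indicator_apply]
      simp [mem_ball, dist_comm]
    simp only [h3]
    rw [lintegral_indicator measurableSet_ball, setLIntegral_const]
    congr 1
    exact Measure.addHaar_ball_center volume y R
  simp only [h2]
  rw [lintegral_mul_const _ hf, mul_comm]

lemma step_tendsto [NeZero N] {s R : ℝ} (hs0 : 0 < s) (hR : 0 < R)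
    {u : ℕ → E → ℝ} (hum : ∀ n, AEStronglyMeasurable (u n) volume)
    {M : ℝ≥0∞} (hM : M ≠ ⊤)
    (hG : ∀ n, (∫⁻ x, ∫⁻ y, (‖u n x - u n y‖₊:ℝ≥0∞) ^ (2:ℝ) / edist x y ^ ((N:ℝ)+2*s)) ≤ M)
    {p : ℝ} (hp2 : 2 ≤ p) (hqp : p < 2 + 2*s*p/N)
    {ε : ℕ → ℝ≥0∞} (hε0 : Tendsto ε atTop (𝓝 0))
    (hεx : ∀ n x, (∫⁻ y in ball x R, (‖u n y‖₊:ℝ≥0∞) ^ p) ≤ ε n)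
    {K : ℝ≥0∞} (hK : K ≠ ⊤) (hKb : ∀ᶠ n in atTop, (∫⁻ x, (‖u n x‖₊:ℝ≥0∞) ^ p) ≤ K) :
    Tendsto (fun n => ∫⁻ x, (‖u n x‖₊:ℝ≥0∞) ^ (2 + 2*s*p/N)) atTop (𝓝 0) := by
  have hp0 : (0:ℝ) < p := by linarith
  set q : ℝ := 2 + 2*s*p/N with hqdef
  have hN0 : (0:ℝ) < N := by exact_mod_cast Nat.pos_of_ne_zero (NeZero.ne N)
  obtain ⟨C, hCt, hC⟩ := key_est (N := N) (R := R) hs0 hp2 hR hqp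
  set volR := volume (ball (0:E) R) with hvolRdef
  have hvolRt : volR ≠ ⊤ := measure_ball_lt_top.ne
  -- eventual bound
  have hbound : ∀ᶠ n in atTop,
      (∫⁻ x, (‖u n x‖₊:ℝ≥0∞) ^ q)
        ≤ (C * M) * (ε n) ^ (2*s/(N:ℝ)) + (C * (volR * K)) * (ε n) ^ (q/p - 1) := by
    have hev : ∀ᶠ n in atTop, ε n ≤ 1 := (ENNReal.tendsto_nhds_zero.1 hε0) 1 one_pos
    filter_upwards [hev, hKb] with n hεn hKn
    have hεt : ε n ≠ ⊤ := (lt_of_le_of_lt hεn ENNReal.one_lt_top).ne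
    set v : E → ℝ := (hum n).mk (u n) with hvdef
    have hveq : u n =ᵐ[volume] v := (hum n).ae_eq_mk
    have hv : Measurable v := (hum n).stronglyMeasurable_mk.measurable
    -- transfer lemmas
    have htr : ∀ c : ℝ, (∫⁻ x, (‖u n x‖₊:ℝ≥0∞) ^ c) = ∫⁻ x, (‖v x‖₊:ℝ≥0∞) ^ c := by
      intro c
      refine lintegral_congr_ae ?_
      filter_upwards [hveq] with x hx
      rw [hx]
    have htrball : ∀ x, (∫⁻ y in ball x R, (‖v y‖₊:ℝ≥0∞) ^ p)
        = ∫⁻ y in ball x R, (‖u n y‖₊:ℝ≥0∞) ^ p := by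
      intro x
      refine lintegral_congr_ae (ae_restrict_of_ae ?_)
      filter_upwards [hveq] with y hy
      rw [hy]
    have htrG : (∫⁻ x, ∫⁻ y, (‖v x - v y‖₊:ℝ≥0∞) ^ (2:ℝ) / edist x y ^ ((N:ℝ)+2*s))
        = ∫⁻ x, ∫⁻ y, (‖u n x - u n y‖₊:ℝ≥0∞) ^ (2:ℝ) / edist x y ^ ((N:ℝ)+2*s) := by
      refine lintegral_congr_ae ?_
      filter_upwards [hveq] with x hx
      refine lintegral_congr_ae ?_
      filter_upwards [hveq] with y hy
      rw [hx, hy]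
    have hεx' : ∀ x, (∫⁻ y in ball x R, (‖v y‖₊:ℝ≥0∞) ^ p) ≤ ε n := by
      intro x
      rw [htrball]
      exact hεx n x
    have hkey := hC v hv (ε n) hεt hεx'
    rw [htr q]
    refine hkey.trans ?_
    have hDf : (∫⁻ x, ∫⁻ y in ball x R, (‖v y‖₊:ℝ≥0∞) ^ p) ≤ volR * K := by
      calc (∫⁻ x, ∫⁻ y in ball x R, (‖v y‖₊:ℝ≥0∞) ^ p)
          = volR * ∫⁻ y, (‖v y‖₊:ℝ≥0∞) ^ p :=
            integral_Df (emeas_rpow' hv.nnnorm.coe_nnreal_ennreal p) R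
        _ = volR * ∫⁻ x, (‖u n x‖₊:ℝ≥0∞) ^ p := by rw [← htr p]
        _ ≤ volR * K := mul_le_mul_right hKn _
    have hGle : (∫⁻ x, ∫⁻ y, (‖v x - v y‖₊:ℝ≥0∞) ^ (2:ℝ) / edist x y ^ ((N:ℝ)+2*s)) ≤ M := by
      rw [htrG]
      exact hG n
    calc C * ((ε n) ^ (2*s/(N:ℝ))
            * ∫⁻ x, ∫⁻ y, (‖v x - v y‖₊:ℝ≥0∞) ^ (2:ℝ) / edist x y ^ ((N:ℝ)+2*s))
          + C * ((ε n) ^ (q/p - 1) * ∫⁻ x, ∫⁻ y in ball x R, (‖v y‖₊:ℝ≥0∞) ^ p)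
        ≤ C * ((ε n) ^ (2*s/(N:ℝ)) * M) + C * ((ε n) ^ (q/p - 1) * (volR * K)) := by
          gcongr
      _ = (C * M) * (ε n) ^ (2*s/(N:ℝ)) + (C * (volR * K)) * (ε n) ^ (q/p - 1) := by
          ring
  refine sq0 hbound ?_
  have h1 : Tendsto (fun n => (C * M) * (ε n) ^ (2*s/(N:ℝ))) atTop (𝓝 0) := by
    have := ENNReal.Tendsto.const_mul (a := C * M)
      (rpow_tendsto (by positivity : (0:ℝ) < 2*s/(N:ℝ)) hε0)
      (Or.inr (ENNReal.mul_ne_top hCt hM))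
    simpa using this
  have h2 : Tendsto (fun n => (C * (volR * K)) * (ε n) ^ (q/p - 1)) atTop (𝓝 0) := by
    have hqp1 : (0:ℝ) < q/p - 1 := by
      have : 1 < q/p := by
        rw [lt_div_iff₀ hp0]
        linarith
      linarith
    have := ENNReal.Tendsto.const_mul (a := C * (volR * K))
      (rpow_tendsto hqp1 hε0)
      (Or.inr (ENNReal.mul_ne_top hCt (ENNReal.mul_ne_top hvolRt hK)))
    simpa using this
  simpa using h1.add h2

lemma interp_tendsto {u : ℕ → E → ℝ} (hum : ∀ n, AEStronglyMeasurable (u n) volume)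
    {M : ℝ≥0∞} (hM : M ≠ ⊤) (hL2 : ∀ n, (∫⁻ x, (‖u n x‖₊:ℝ≥0∞) ^ (2:ℝ)) ≤ M)
    {r q : ℝ} (h2q : 2 < q) (hqr : q ≤ r)
    (hr : Tendsto (fun n => ∫⁻ x, (‖u n x‖₊:ℝ≥0∞) ^ r) atTop (𝓝 0)) :
    Tendsto (fun n => ∫⁻ x, (‖u n x‖₊:ℝ≥0∞) ^ q) atTop (𝓝 0) := by
  rcases eq_or_lt_of_le hqr with rfl | hlt
  · exact hr
  have h2r : (2:ℝ) < r := lt_trans h2q hlt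
  set θ : ℝ := (q - 2)/(r - 2) with hθdef
  have hθ0 : 0 < θ := by
    apply div_pos <;> linarith
  have hθ1 : θ < 1 := by
    rw [hθdef, div_lt_one (by linarith)]
    linarith
  have hconj : Real.HolderConjugate (1/(1-θ)) (1/θ) := by
    rw [Real.holderConjugate_iff]
    constructor
    · rw [lt_div_iff₀ (by linarith)]
      linarith
    · simp only [one_div, inv_inv]
      ring
  -- per n bound
  have hbound : ∀ n, (∫⁻ x, (‖u n x‖₊:ℝ≥0∞) ^ q)
      ≤ M ^ (1-θ) * (∫⁻ x, (‖u n x‖₊:ℝ≥0∞) ^ r) ^ θ := by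
    intro n
    set v : E → ℝ := (hum n).mk (u n) with hvdef
    have hveq : u n =ᵐ[volume] v := (hum n).ae_eq_mk
    have hv : Measurable v := (hum n).stronglyMeasurable_mk.measurable
    have htr : ∀ c : ℝ, (∫⁻ x, (‖u n x‖₊:ℝ≥0∞) ^ c) = ∫⁻ x, (‖v x‖₊:ℝ≥0∞) ^ c := by
      intro c
      refine lintegral_congr_ae ?_
      filter_upwards [hveq] with x hx
      rw [hx]
    rw [htr q, htr r]
    have hr20 : r - (2:ℝ) ≠ 0 := by linarith
    have h1θ : (1:ℝ) - θ ≠ 0 := by linarith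
    have hθne : θ ≠ 0 := hθ0.ne'
    have hv2 : (∫⁻ x, (‖v x‖₊:ℝ≥0∞) ^ (2:ℝ)) ≤ M := by
      rw [← htr 2]
      exact hL2 n
    set f : E → ℝ≥0∞ := fun x => (‖v x‖₊:ℝ≥0∞) ^ (2*(1-θ)) with hfdef
    set g : E → ℝ≥0∞ := fun x => (‖v x‖₊:ℝ≥0∞) ^ (r*θ) with hgdef
    have hv_meas : Measurable fun x => ((‖v x‖₊ : ℝ≥0∞)) := hv.nnnorm.coe_nnreal_ennreal
    have hf : Measurable f := (ENNReal.continuous_rpow_const).measurable.comp hv_meas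
    have hg : Measurable g := (ENNReal.continuous_rpow_const).measurable.comp hv_meas
    have hexp : 2*(1-θ) + r*θ = q := by
      rw [hθdef]
      field_simp
      ring
    have hfg : ∀ x, (‖v x‖₊:ℝ≥0∞) ^ q = (f * g) x := by
      intro x
      show _ = f x * g x
      rw [hfdef, hgdef]
      simp only
      rw [← ENNReal.rpow_add_of_nonneg _ _ (by nlinarith) (by nlinarith), hexp]
    have hH := ENNReal.lintegral_mul_le_Lp_mul_Lq volume hconj hf.aemeasurable hg.aemeasurable
    calc (∫⁻ x, (‖v x‖₊:ℝ≥0∞) ^ q) = ∫⁻ x, (f * g) x := by simp only [hfg]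
      _ ≤ (∫⁻ x, f x ^ (1/(1-θ))) ^ (1/(1/(1-θ))) * (∫⁻ x, g x ^ (1/θ)) ^ (1/(1/θ)) := hH
      _ = (∫⁻ x, (‖v x‖₊:ℝ≥0∞) ^ (2:ℝ)) ^ (1-θ) * (∫⁻ x, (‖v x‖₊:ℝ≥0∞) ^ r) ^ θ := by
          rw [one_div_one_div, one_div_one_div]
          congr 1
          · congr 1
            refine lintegral_congr fun x => ?_
            rw [hfdef]
            simp only
            rw [← ENNReal.rpow_mul]
            congr 1
            field_simp
          · congr 1
            refine lintegral_congr fun x => ?_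
            rw [hgdef]
            simp only
            rw [← ENNReal.rpow_mul]
            congr 1
            field_simp
      _ ≤ M ^ (1-θ) * (∫⁻ x, (‖v x‖₊:ℝ≥0∞) ^ r) ^ θ := by
          exact mul_le_mul_left (ENNReal.rpow_le_rpow hv2 (by linarith)) _
  refine sq0 (Eventually.of_forall hbound) ?_
  have := ENNReal.Tendsto.const_mul (a := M ^ (1-θ))
    (rpow_tendsto hθ0 hr)
    (Or.inr (ENNReal.rpow_ne_top_of_nonneg (by linarith) hM))
  simpa using this

end

/-- Fractional Lions vanishing lemma: if `{uₙ}` is bounded in `H^s(ℝ^N)` (L² norm plus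
Gagliardo seminorm), `uₙ ⇀ 0`, and `sup_x ∫_{B(x,R)} |uₙ|² → 0` for some `R > 0`, then
`uₙ → 0` strongly in `L^q(ℝ^N)` for every `2 < q < 2N/(N−2s)`. -/
theorem stmt19 {N : ℕ} (hN : 3 ≤ N) (s : ℝ) (hs0 : 0 < s) (hs1 : s < 1)
    (u : ℕ → EuclideanSpace ℝ (Fin N) → ℝ)
    (hmeas : ∀ n, MemLp (u n) 2 volume)
    (hbd : ∃ M : ℝ≥0∞, M ≠ ⊤ ∧ ∀ n,
      (∫⁻ x, (‖u n x‖₊ : ℝ≥0∞) ^ (2 : ℝ)) +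
        (∫⁻ x, ∫⁻ y, (‖u n x - u n y‖₊ : ℝ≥0∞) ^ (2 : ℝ) /
          (edist x y) ^ ((N : ℝ) + 2 * s)) ≤ M)
    (hvan : ∃ R : ℝ, 0 < R ∧
      Tendsto (fun n => ⨆ x : EuclideanSpace ℝ (Fin N),
        ∫⁻ y in ball x R, (‖u n y‖₊ : ℝ≥0∞) ^ (2 : ℝ)) atTop (𝓝 0)) :
    ∀ q : ℝ, 2 < q → q < 2 * N / (N - 2 * s) →
      Tendsto (fun n => ∫⁻ x, (‖u n x‖₊ : ℝ≥0∞) ^ q) atTop (𝓝 0) := by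
  obtain ⟨M, hM, hbd'⟩ := hbd
  obtain ⟨R, hR, hvanR⟩ := hvan
  intro q hq2 hqstar
  haveI : NeZero N := ⟨by omega⟩
  have hum : ∀ n, AEStronglyMeasurable (u n) volume := fun n => (hmeas n).1
  have hG : ∀ n, (∫⁻ x, ∫⁻ y, (‖u n x - u n y‖₊:ℝ≥0∞) ^ (2:ℝ)
      / edist x y ^ ((N:ℝ)+2*s)) ≤ M := fun n => le_trans le_add_self (hbd' n)
  have hL2 : ∀ n, (∫⁻ x, (‖u n x‖₊:ℝ≥0∞) ^ (2:ℝ)) ≤ M :=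
    fun n => le_trans le_self_add (hbd' n)
  have hN3 : (3:ℝ) ≤ (N:ℝ) := by exact_mod_cast hN
  have hN0 : (0:ℝ) < N := by linarith
  have hden : (0:ℝ) < (N:ℝ) - 2*s := by linarith
  set c : ℝ := 2*s/N with hcdef
  have hc0 : 0 < c := by positivity
  have hc1 : c < 1 := by
    rw [hcdef, div_lt_one hN0]
    linarith
  set tstar : ℝ := 2 * N / ((N:ℝ) - 2 * s) with htsdef
  have hfix : 2 + c * tstar = tstar := by
    rw [hcdef, htsdef]
    field_simp
    ring
  have hq0lt : 2 + 4*s/(N:ℝ) < tstar := by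
    rw [htsdef, lt_div_iff₀ hden]
    have key : (2+4*s/(N:ℝ))*((N:ℝ)-2*s) = 2*(N:ℝ) - 8*s^2/(N:ℝ) := by
      field_simp
      ring
    have pos : 0 < 8*s^2/(N:ℝ) := by positivity
    linarith [key]
  set Δ : ℝ := tstar - (2 + 4*s/(N:ℝ)) with hΔdef
  have hΔ : 0 < Δ := by
    rw [hΔdef]
    linarith
  set Q : ℕ → ℝ := fun k => tstar - c^k * Δ with hQdef
  have hQ2 : ∀ k, 2 < Q k := by
    intro k
    have h1 : c^k ≤ 1 := pow_le_one₀ hc0.le hc1.le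
    have h2 : c^k * Δ ≤ Δ := by nlinarith
    have h3 : 0 < 4*s/(N:ℝ) := by positivity
    show 2 < tstar - c^k*Δ
    have h4 : tstar - Δ = 2 + 4*s/(N:ℝ) := by rw [hΔdef]; ring
    clear_value tstar Δ
    linarith
  have hQlt : ∀ k, Q k < tstar := by
    intro k
    have h1 : 0 < c^k * Δ := by positivity
    show tstar - c^k*Δ < tstar
    linarith
  have hQstep : ∀ k, 2 + 2*s*(Q k)/N = Q (k+1) := by
    intro k
    show 2 + 2*s*(tstar - c^k*Δ)/N = tstar - c^(k+1)*Δ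
    rw [hcdef] at hfix ⊢
    linear_combination hfix
  have hQmono : ∀ k, Q k < 2 + 2*s*(Q k)/N := by
    intro k
    rw [hQstep k]
    have h1 : c^(k+1) < c^k := by
      calc c^(k+1) = c^k * c := pow_succ c k
        _ < c^k * 1 := by
            have : 0 < c^k := by positivity
            exact (mul_lt_mul_iff_right₀ this).2 hc1
        _ = c^k := mul_one _
    show tstar - c^k*Δ < tstar - c^(k+1)*Δ
    nlinarith
  -- main induction
  have htend : ∀ k, Tendsto (fun n => ∫⁻ x, (‖u n x‖₊:ℝ≥0∞) ^ (Q k)) atTop (𝓝 0) := by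
    intro k
    induction k with
    | zero =>
      have hbase := step_tendsto (N := N) hs0 hR hum hM hG (p := 2) le_rfl
        (by
          have : 0 < 2*s*2/(N:ℝ) := by positivity
          linarith)
        (ε := fun n => ⨆ x : EuclideanSpace ℝ (Fin N),
          ∫⁻ y in ball x R, (‖u n y‖₊ : ℝ≥0∞) ^ (2 : ℝ)) hvanR
        (fun n x => le_iSup (fun x => ∫⁻ y in ball x R, (‖u n y‖₊ : ℝ≥0∞) ^ (2:ℝ)) x)
        hM (Eventually.of_forall hL2)
      have hexp0 : 2 + 2*s*2/(N:ℝ) = Q 0 := by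
        show _ = tstar - c^0 * Δ
        rw [hΔdef]
        ring
      rw [← hexp0]
      exact hbase
    | succ k ih =>
      have hstep := step_tendsto (N := N) hs0 hR hum hM hG (p := Q k) (hQ2 k).le
        (hQmono k) (ε := fun n => ∫⁻ x, (‖u n x‖₊:ℝ≥0∞) ^ (Q k)) ih
        (fun n x => setLIntegral_le_lintegral _ _)
        (K := 1) ENNReal.one_ne_top ((ENNReal.tendsto_nhds_zero.1 ih) 1 one_pos)
      rw [← hQstep k]
      exact hstep
  -- choose k with q ≤ Q k
  obtain ⟨k, hk⟩ := exists_pow_lt_of_lt_one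
    (x := (tstar - q)/Δ) (div_pos (by linarith) hΔ) hc1
  have hqQ : q ≤ Q k := by
    have h1 : c^k * Δ < tstar - q := by
      rw [lt_div_iff₀ hΔ] at hk
      linarith
    show q ≤ tstar - c^k*Δ
    linarith
  exact interp_tendsto hum hM hL2 hq2 hqQ (htend k)
end
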